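/- Let C₁, C₂ be disjoint open convex sets in ℝ^d and h = {x : f x = c} a hyperplane with C₁ ⊆ {f < c} and C₂ ⊆ {f > c}. Let F ⊆ h be a relatively open convex set such that C₁ ∪ F ∪ C₂ is convex. If K ⊆ ℝ^d is closed and convex, F ∩ K = ∅, and there exist x₁ ∈ C₁ ∩ frontier K and x₂ ∈ C₂ ∩ frontier K, then we reach a contradiction; i.e., such x₁, x₂ cannot both exist. -/

import Mathlib

/-! The segment joining a point of `K` in `C₁` to a point of `K` in `C₂` lies in `K` and in the
convex set `C₁ ∪ F ∪ C₂`. It crosses the hyperplane `{f = c}`, and the crossing point, being in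
neither open side, lies in `F ∩ K`. -/

open Set

section

variable {E : Type*} [AddCommGroup E] [Module ℝ E]

theorem AffineMap.exists_mem_segment_apply_eq (f : E →ᵃ[ℝ] ℝ) {x y : E} {c : ℝ}
    (hc : c ∈ Icc (f x) (f y)) : ∃ z ∈ segment ℝ x y, f z = c := by
  rw [← mem_image, image_segment]
  exact Icc_subset_segment hc

theorem inter_nonempty_of_mem_both_sides {C₁ C₂ F K : Set E} {f : E →ₗ[ℝ] ℝ} {c : ℝ}
    (hC₁side : C₁ ⊆ {x | f x < c}) (hC₂side : C₂ ⊆ {x | c < f x})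
    (hunion : Convex ℝ (C₁ ∪ F ∪ C₂)) (hKconv : Convex ℝ K)
    {x₁ x₂ : E} (hx₁ : x₁ ∈ C₁ ∩ K) (hx₂ : x₂ ∈ C₂ ∩ K) : (F ∩ K).Nonempty := by
  obtain ⟨y, hy, hfy : f y = c⟩ := f.toAffineMap.exists_mem_segment_apply_eq
    ⟨(hC₁side hx₁.1).le, (hC₂side hx₂.1).le⟩
  have hyS : y ∈ (C₁ ∪ F ∪ C₂) ∩ K :=
    (hunion.inter hKconv).segment_subset
      ⟨Or.inl (Or.inl hx₁.1), hx₁.2⟩ ⟨Or.inr hx₂.1, hx₂.2⟩ hy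
  obtain ⟨(hy₁ | hyF) | hy₂, hyK⟩ := hyS
  · exact absurd hfy (hC₁side hy₁).ne
  · exact ⟨y, hyF, hyK⟩
  · exact absurd hfy (hC₂side hy₂).ne'

end

theorem no_shared_facet_general {d : ℕ}
    (C₁ C₂ : Set (EuclideanSpace ℝ (Fin d)))
    (f : EuclideanSpace ℝ (Fin d) →ₗ[ℝ] ℝ) (c : ℝ)
    (hC₁side : C₁ ⊆ {x | f x < c}) (hC₂side : C₂ ⊆ {x | c < f x})
    (F : Set (EuclideanSpace ℝ (Fin d)))
    (hunion : Convex ℝ (C₁ ∪ F ∪ C₂))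
    (K : Set (EuclideanSpace ℝ (Fin d)))
    (hKclosed : IsClosed K) (hKconv : Convex ℝ K)
    (hFK : F ∩ K = ∅) :
    ¬ ((C₁ ∩ frontier K).Nonempty ∧ (C₂ ∩ frontier K).Nonempty) := by
  rintro ⟨⟨x₁, hx₁C, hx₁K⟩, ⟨x₂, hx₂C, hx₂K⟩⟩
  have hfrontier := hKclosed.frontier_subset
  exact (inter_nonempty_of_mem_both_sides hC₁side hC₂side hunion hKconv
    ⟨hx₁C, hfrontier hx₁K⟩ ⟨hx₂C, hfrontier hx₂K⟩).ne_empty hFK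

theorem no_shared_facet {d : ℕ}
    (C₁ C₂ : Set (EuclideanSpace ℝ (Fin d)))
    (hC₁open : IsOpen C₁) (hC₂open : IsOpen C₂)
    (hC₁conv : Convex ℝ C₁) (hC₂conv : Convex ℝ C₂)
    (hdisj : Disjoint C₁ C₂)
    (f : EuclideanSpace ℝ (Fin d) →ₗ[ℝ] ℝ) (hf : f ≠ 0) (c : ℝ)
    (h : Set (EuclideanSpace ℝ (Fin d))) (hh : h = {x | f x = c})
    (hC₁side : C₁ ⊆ {x | f x < c}) (hC₂side : C₂ ⊆ {x | c < f x})
    (F : Set (EuclideanSpace ℝ (Fin d))) (hFh : F ⊆ h)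
    (hFconv : Convex ℝ F)
    (hFopen : ∃ U : Set (EuclideanSpace ℝ (Fin d)), IsOpen U ∧ F = U ∩ h)
    (hunion : Convex ℝ (C₁ ∪ F ∪ C₂))
    (K : Set (EuclideanSpace ℝ (Fin d)))
    (hKclosed : IsClosed K) (hKconv : Convex ℝ K)
    (hFK : F ∩ K = ∅) :
    ¬ ((C₁ ∩ frontier K).Nonempty ∧ (C₂ ∩ frontier K).Nonempty) :=
  no_shared_facet_general C₁ C₂ f c hC₁side hC₂side F hunion K hKclosed hKconv hFK
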